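/- arXiv:1609.03919 — 4 statements merged into one kernel-verified Lean document; each statement's English description precedes it below -/
import Mathlib

section
/- If p^m exactly divides S with 0 \le m < n and S_1 = S/p^m, then G(a,b,c;S;p^n) = p^{2m} \cdot G(a,b,c;S_1;p^{n-m}). -/
open Finset

noncomputable def Gsum (S : ℤ) (k : ℕ) : ℂ :=
  ∑ x ∈ Finset.range k,
    Complex.exp (2 * Real.pi * Complex.I * ((S * (x : ℤ) ^ 2 : ℤ) : ℂ) / (k : ℂ))

noncomputable def Gsum2 (a b c S : ℤ) (k : ℕ) : ℂ :=
  ∑ x ∈ Finset.range k, ∑ y ∈ Finset.range k,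
    Complex.exp (2 * Real.pi * Complex.I *
      ((S * (a * (x : ℤ) ^ 2 + b * (x : ℤ) * (y : ℤ) + c * (y : ℤ) ^ 2) : ℤ) : ℂ) / (k : ℂ))

/-!
Writing `p ^ n = p ^ m * p ^ (n - m)` and `S = p ^ m * S₁`, the factor `p ^ m` cancels in the
phase `S Q(x, y) / p ^ n`, leaving a summand that is `p ^ (n - m)`-periodic in `x` and in `y`.
Each of the two sums over `range (p ^ m * p ^ (n - m))` is therefore `p ^ m` copies of the sum
over one period.
-/

theorem Finset.sum_range_mul_of_periodic {M : Type*} [AddCommMonoid M] {f : ℕ → M} {T : ℕ}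
    (hf : Function.Periodic f T) (k : ℕ) :
    ∑ x ∈ range (k * T), f x = k • ∑ x ∈ range T, f x := by
  induction k with
  | zero => simp
  | succ k ih =>
    have hshift : ∑ x ∈ range T, f (k * T + x) = ∑ x ∈ range T, f x :=
      sum_congr rfl fun x _ => by rw [add_comm]; exact hf.nat_mul k x
    rw [Nat.succ_mul, sum_range_add, ih, hshift, succ_nsmul]

theorem Complex.exp_two_pi_I_mul_div_eq_of_dvd {T : ℕ} {A B : ℤ} (h : (T : ℤ) ∣ A - B) :
    exp (2 * Real.pi * I * A / T) = exp (2 * Real.pi * I * B / T) := by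
  rcases eq_or_ne T 0 with rfl | hT
  · simp
  obtain ⟨k, hk⟩ := h
  have hA : (A : ℂ) = B + T * k := by rw [← Int.cast_natCast, ← Int.cast_mul, ← hk]; push_cast; ring
  have hT' : (T : ℂ) ≠ 0 := Nat.cast_ne_zero.mpr hT
  rw [hA, show 2 * Real.pi * I * (B + T * k) / T = 2 * Real.pi * I * B / T + k * (2 * Real.pi * I)
    by field_simp, exp_add, exp_int_mul_two_pi_mul_I, mul_one]

noncomputable def binaryQuadPhase (a b c S : ℤ) (k x y : ℕ) : ℂ :=
  Complex.exp (2 * Real.pi * Complex.I *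
    ((S * (a * (x : ℤ) ^ 2 + b * (x : ℤ) * (y : ℤ) + c * (y : ℤ) ^ 2) : ℤ) : ℂ) / (k : ℂ))

theorem Gsum2_eq_sum_binaryQuadPhase (a b c S : ℤ) (k : ℕ) :
    Gsum2 a b c S k = ∑ x ∈ range k, ∑ y ∈ range k, binaryQuadPhase a b c S k x y :=
  rfl

theorem binaryQuadPhase_periodic_left (a b c S : ℤ) (k y : ℕ) :
    Function.Periodic (fun x ↦ binaryQuadPhase a b c S k x y) k := fun x ↦
  Complex.exp_two_pi_I_mul_div_eq_of_dvd ⟨S * (a * (2 * x + k) + b * y), by push_cast; ring⟩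

theorem binaryQuadPhase_periodic_right (a b c S : ℤ) (k x : ℕ) :
    Function.Periodic (binaryQuadPhase a b c S k x) k := fun y ↦
  Complex.exp_two_pi_I_mul_div_eq_of_dvd ⟨S * (b * x + c * (2 * y + k)), by push_cast; ring⟩

theorem binaryQuadPhase_mul_mul (a b c S : ℤ) {d : ℕ} (hd : d ≠ 0) (k x y : ℕ) :
    binaryQuadPhase a b c (d * S) (d * k) x y = binaryQuadPhase a b c S k x y := by
  have hd' : (d : ℂ) ≠ 0 := Nat.cast_ne_zero.mpr hd
  unfold binaryQuadPhase
  congr 1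
  push_cast
  field_simp

theorem Gsum2_mul_mul (a b c S : ℤ) (d k : ℕ) :
    Gsum2 a b c (d * S) (d * k) = (d : ℂ) ^ 2 * Gsum2 a b c S k := by
  rcases eq_or_ne d 0 with rfl | hd
  · simp [Gsum2]
  simp only [Gsum2_eq_sum_binaryQuadPhase, binaryQuadPhase_mul_mul a b c S hd]
  simp only [sum_range_mul_of_periodic (binaryQuadPhase_periodic_right a b c S k _) d,
    ← smul_sum]
  rw [sum_range_mul_of_periodic (fun x ↦ sum_congr rfl fun y _ ↦
    binaryQuadPhase_periodic_left a b c S k y x) d, smul_smul, nsmul_eq_mul, Nat.cast_mul, sq]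

theorem stmt_1_general (p : ℕ) (n m : ℕ) (hm : m < n)
    (a b c S : ℤ) (hdvd : (p : ℤ) ^ m ∣ S) :
    Gsum2 a b c S (p ^ n) = (p : ℂ) ^ (2 * m) * Gsum2 a b c (S / (p : ℤ) ^ m) (p ^ (n - m)) := by
  have hn_split : p ^ n = p ^ m * p ^ (n - m) := by rw [← pow_add, Nat.add_sub_cancel' hm.le]
  have hS_split : S = ((p ^ m : ℕ) : ℤ) * (S / (p : ℤ) ^ m) := by
    push_cast; exact (Int.mul_ediv_cancel' hdvd).symm
  rw [hn_split, hS_split, Gsum2_mul_mul, ← hS_split, pow_mul', Nat.cast_pow]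

theorem stmt_1 (p : ℕ) (hp : p.Prime) (n m : ℕ) (hn : 0 < n) (hm : m < n)
    (a b c S : ℤ) (hdvd : (p : ℤ) ^ m ∣ S) (hndvd : ¬ (p : ℤ) ^ (m + 1) ∣ S) :
    Gsum2 a b c S (p ^ n) = (p : ℂ) ^ (2 * m) * Gsum2 a b c (S / (p : ℤ) ^ m) (p ^ (n - m)) :=
  stmt_1_general p n m hm a b c S hdvd
end

section
/- For n > 1 and odd S, the Gauss sum satisfies G(S;2^n) = (1+i^S)(2/S)^n \sqrt{2^n}, where (2/S) is the Jacobi symbol; moreover G(S;2) = 0. -/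
/-!
Write `e_N(t) = exp(2πi t / N)`. Splitting `G(S; 4M)` into even and odd `x`, the even terms give
`2 G(S; M)`. If moreover `4 ∣ M`, shifting an odd `x` by `M` multiplies `e_{4M}(S x²)` by
`e_{4M}(2MSx) = -1`, so the odd terms cancel and `G(S; 4M) = 2 G(S; M)`. Since odd squares are
`1` mod `8`, this leaves `G(S; 4) = 2 (1 + i^S)` and `G(S; 8) = 4 e_8(S)`, and the identity
`2 e_8(S) = (1 + i^S) (2/S) √2` is checked on the odd residues mod `8`.
-/

open Finset

open ZMod Complex

section RangeSums

variable {M : Type*}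

theorem Finset.sum_range_two_mul [AddCommMonoid M] (f : ℕ → M) (k : ℕ) :
    ∑ x ∈ range (2 * k), f x = ∑ y ∈ range k, f (2 * y) + ∑ y ∈ range k, f (2 * y + 1) := by
  induction k with
  | zero => simp
  | succ k ih =>
    rw [mul_add, mul_one, sum_range_succ, sum_range_succ, ih, sum_range_succ, sum_range_succ]
    abel

theorem Function.Periodic.sum_range_mul [AddCommMonoid M] {f : ℕ → M} {c : ℕ}
    (hf : Function.Periodic f c) (k : ℕ) :
    ∑ x ∈ range (k * c), f x = k • ∑ x ∈ range c, f x := by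
  induction k with
  | zero => simp
  | succ k ih =>
    rw [add_mul, one_mul, sum_range_add, ih, succ_nsmul]
    congr 1
    exact sum_congr rfl fun x _ => (congrArg f (add_comm (k * c) x)).trans (hf.nat_mul k x)

theorem Function.Antiperiodic.sum_range_two_mul [AddCommGroup M] {f : ℕ → M} {c : ℕ}
    (hf : Function.Antiperiodic f c) : ∑ x ∈ range (2 * c), f x = 0 := by
  rw [two_mul, sum_range_add, sum_congr rfl fun x _ => (congrArg f (add_comm c x)).trans (hf x),
    sum_neg_distrib, add_neg_cancel]

end RangeSums

namespace ZMod

theorem stdAddChar_intCast_mul (a N : ℕ) [NeZero a] [NeZero N] (t : ℤ) :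
    stdAddChar ((a * t : ℤ) : ZMod (a * N)) = stdAddChar (t : ZMod N) := by
  have : (a : ℂ) ≠ 0 := NeZero.ne _
  rw [stdAddChar_coe, stdAddChar_coe]
  congr 1
  push_cast
  field_simp

theorem stdAddChar_intCast_mul_of_odd {N M : ℕ} [NeZero N] (hN : N = 2 * M) {t : ℤ}
    (ht : Odd t) : stdAddChar ((M * t : ℤ) : ZMod N) = -1 := by
  have : (M : ℂ) ≠ 0 := by
    have := NeZero.ne N
    exact_mod_cast (by omega : M ≠ 0)
  rw [stdAddChar_coe, show 2 * (Real.pi : ℂ) * I * ((M * t : ℤ) : ℂ) / (N : ℂ)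
      = t * (Real.pi * I) by rw [hN]; push_cast; field_simp, exp_int_mul, exp_pi_mul_I,
    ht.neg_one_zpow]

theorem stdAddChar_intCast_four (t : ℤ) : stdAddChar (t : ZMod 4) = I ^ t := by
  rw [stdAddChar_coe, show 2 * (Real.pi : ℂ) * I * t / ((4 : ℕ) : ℂ) = t * (Real.pi / 2 * I) by
    push_cast; ring, exp_int_mul, exp_pi_div_two_mul_I]

theorem stdAddChar_one_eight : stdAddChar (1 : ZMod 8) = (1 + I) * (√2 / 2) := by
  have h := stdAddChar_coe (N := 8) 1
  rw [Int.cast_one] at h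
  rw [h, show 2 * (Real.pi : ℂ) * I * ((1 : ℤ) : ℂ) / ((8 : ℕ) : ℂ) = (Real.pi / 4 : ℝ) * I by
    push_cast; ring, exp_mul_I, ← ofReal_cos, ← ofReal_sin, Real.cos_pi_div_four,
    Real.sin_pi_div_four]
  push_cast
  ring

theorem two_mul_stdAddChar_intCast_eight {S : ℤ} (hS : Odd S) :
    2 * stdAddChar (S : ZMod 8) = (1 + I ^ S) * (χ₈ S : ℂ) * √2 := by
  set ω := stdAddChar (1 : ZMod 8) with hω
  have hpow (n : ℕ) [n.AtLeastTwo] :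
      stdAddChar (OfNat.ofNat n : ZMod 8) = ω ^ (OfNat.ofNat n : ℕ) := by
    rw [← AddChar.map_nsmul_eq_pow, nsmul_one, Nat.cast_ofNat]
  have hI : I = ω ^ 2 := by
    have hs : (√2 : ℂ) ^ 2 = 2 := by norm_cast; simp
    rw [hω, stdAddChar_one_eight]
    linear_combination (-1 / 2 : ℂ) * I_sq - ((1 + I) ^ 2 / 4) * hs
  have hsqrt : (√2 : ℂ) = (1 - I) * ω := by
    rw [hω, stdAddChar_one_eight]
    linear_combination (√2 / 2 : ℂ) * I_sq
  have h4 : ω ^ 4 = -1 := by rw [show ω ^ 4 = (ω ^ 2) ^ 2 by ring, ← hI, I_sq]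
  have hr : S % 8 = 1 ∨ S % 8 = 3 ∨ S % 8 = 5 ∨ S % 8 = 7 := by
    obtain ⟨k, rfl⟩ := hS
    omega
  have h8 : ((S % 8 : ℤ) : ZMod 8) = S := by exact_mod_cast intCast_mod S 8
  rw [← h8, χ₈_int_mod_eight, I_zpow_eq_zpow_mod, show S % 4 = S % 8 % 4 by omega]
  -- once `I` and `√2` are written in terms of `ω`, each case is an identity modulo `ω ^ 4 + 1`
  rcases hr with h | h | h | h <;> rw [h] <;> norm_num [hpow, χ₈_apply, ← hω] <;> rw [hsqrt, hI]
  · linear_combination ω * h4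
  · linear_combination ω * h4
  · linear_combination ω * h4
  · linear_combination (2 * ω ^ 3 - ω) * h4

end ZMod

theorem jacobiSym_two_natAbs {S : ℤ} (hS : Odd S) : jacobiSym 2 S.natAbs = χ₈ S := by
  rw [jacobiSym.at_two (Int.natAbs_odd.2 hS), χ₈_nat_eq_if_mod_eight, χ₈_int_eq_if_mod_eight]
  split_ifs <;> omega

theorem χ₈_intCast_sq_of_odd {S : ℤ} (hS : Odd S) : χ₈ S ^ 2 = 1 := by
  rw [← jacobiSym_two_natAbs hS]
  exact jacobiSym.sq_one (by simpa [Int.gcd] using odd_abs.2 hS)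

theorem Real.sqrt_two_pow_add_two (n : ℕ) : √(2 ^ (n + 2) : ℝ) = 2 * √(2 ^ n) := by
  rw [pow_add, Real.sqrt_mul' _ (by positivity), Real.sqrt_sq zero_le_two, mul_comm]

theorem Gsum_eq_sum_stdAddChar (S : ℤ) (N : ℕ) [NeZero N] :
    Gsum S N = ∑ x ∈ range N, stdAddChar ((S * x ^ 2 : ℤ) : ZMod N) := by
  simp only [Gsum, stdAddChar_coe]

theorem Gsum_four_mul (S : ℤ) (M : ℕ) [NeZero M] :
    Gsum S (4 * M) = 2 * Gsum S M +
      ∑ y ∈ range (2 * M), stdAddChar ((S * (2 * y + 1) ^ 2 : ℤ) : ZMod (4 * M)) := by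
  have hperiodic : Function.Periodic (fun y : ℕ ↦ stdAddChar ((S * y ^ 2 : ℤ) : ZMod M)) M := by
    intro y
    simp
  have heven (y : ℕ) : stdAddChar ((S * ((2 * y : ℕ) : ℤ) ^ 2 : ℤ) : ZMod (4 * M)) =
      stdAddChar ((S * y ^ 2 : ℤ) : ZMod M) := by
    rw [← stdAddChar_intCast_mul 4 M]
    push_cast
    ring_nf
  rw [Gsum_eq_sum_stdAddChar, Gsum_eq_sum_stdAddChar,
    show range (4 * M) = range (2 * (2 * M)) by ring_nf, sum_range_two_mul,
    sum_congr rfl fun y _ ↦ heven y, hperiodic.sum_range_mul, nsmul_eq_mul, Nat.cast_ofNat]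
  norm_cast

theorem sum_range_stdAddChar_odd_sq {N : ℕ} [NeZero N] (hN : ∀ z : ZMod N, (2 * z + 1) ^ 2 = 1)
    (S : ℤ) (k : ℕ) :
    ∑ y ∈ range k, stdAddChar ((S * (2 * y + 1) ^ 2 : ℤ) : ZMod N) =
      k * stdAddChar (S : ZMod N) := by
  simp [hN]

theorem Gsum_two {S : ℤ} (hS : Odd S) : Gsum S 2 = 0 := by
  have h := stdAddChar_intCast_mul_of_odd (N := 2) (M := 1) rfl hS
  rw [Nat.cast_one, one_mul] at h
  simp [Gsum_eq_sum_stdAddChar, sum_range_succ, h]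

theorem Gsum_four (S : ℤ) : Gsum S 4 = 2 * (1 + I ^ S) := by
  have h := Gsum_four_mul S 1
  rw [sum_range_stdAddChar_odd_sq (by decide)] at h
  norm_num at h
  rw [h, show Gsum S 1 = 1 by simp [Gsum], stdAddChar_intCast_four]
  ring

theorem Gsum_eight {S : ℤ} (hS : Odd S) : Gsum S 8 = 4 * stdAddChar (S : ZMod 8) := by
  have h := Gsum_four_mul S 2
  rw [sum_range_stdAddChar_odd_sq (by decide)] at h
  norm_num at h
  rw [h, Gsum_two hS]
  ring

theorem Gsum_sixteen_mul {S : ℤ} (hS : Odd S) (L : ℕ) [NeZero L] :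
    Gsum S (16 * L) = 2 * Gsum S (4 * L) := by
  have hanti : Function.Antiperiodic
      (fun y : ℕ ↦ stdAddChar ((S * (2 * y + 1) ^ 2 : ℤ) : ZMod (4 * (4 * L)))) (2 * L) := by
    intro y
    dsimp only
    have hshift : S * (2 * ((y + 2 * L : ℕ) : ℤ) + 1) ^ 2 =
        S * (2 * y + 1) ^ 2 + (8 * L : ℕ) * (S * (2 * y + 1)) + (4 * (4 * L) : ℕ) * (S * L) := by
      push_cast
      ring
    rw [hshift, Int.cast_add, Int.cast_add, AddChar.map_add_eq_mul, AddChar.map_add_eq_mul,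
      stdAddChar_intCast_mul_of_odd (by ring) (hS.mul (by simp)),
      Int.cast_mul ((4 * (4 * L) : ℕ) : ℤ),
      Int.cast_natCast, natCast_self, zero_mul, AddChar.map_zero_eq_one]
    ring
  have h := Gsum_four_mul S (4 * L)
  rw [show 2 * (4 * L) = 2 * (2 * (2 * L)) by ring, hanti.periodic_two_mul.sum_range_mul,
    hanti.sum_range_two_mul, smul_zero, add_zero] at h
  rw [show 16 * L = 4 * (4 * L) by ring, h]

theorem Gsum_two_pow_add_two {S : ℤ} (hS : Odd S) (n : ℕ) :
    Gsum S (2 ^ (n + 2)) = (1 + I ^ S) * (χ₈ S : ℂ) ^ (n + 2) * √(2 ^ (n + 2)) := by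
  have hχ : (χ₈ S : ℂ) ^ 2 = 1 := by exact_mod_cast χ₈_intCast_sq_of_odd hS
  induction n using Nat.twoStepInduction with
  | zero =>
    rw [show 2 ^ (0 + 2) = 4 by rfl, Gsum_four, hχ, Real.sqrt_two_pow_add_two, pow_zero,
      Real.sqrt_one]
    push_cast
    ring
  | one =>
    rw [show 2 ^ (1 + 2) = 8 by rfl, Gsum_eight hS, Real.sqrt_two_pow_add_two, pow_one,
      show (4 : ℂ) = 2 * 2 by norm_num, mul_assoc, two_mul_stdAddChar_intCast_eight hS]
    push_cast
    linear_combination -2 * (1 + I ^ S) * (χ₈ S : ℂ) * √2 * hχ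
  | more n ih _ =>
    rw [show 2 ^ (n + 2 + 2) = 16 * 2 ^ n by ring, Gsum_sixteen_mul hS,
      show 4 * 2 ^ n = 2 ^ (n + 2) by ring, ih, Real.sqrt_two_pow_add_two (n + 2)]
    push_cast
    linear_combination -2 * (1 + I ^ S) * (χ₈ S : ℂ) ^ (n + 2) * √(2 ^ (n + 2)) * hχ

theorem stmt_4 (S : ℤ) (hS : Odd S) :
    Gsum S 2 = 0 ∧
      ∀ n : ℕ, 1 < n →
        Gsum S (2 ^ n) =
          (1 + Complex.I ^ S) * ((jacobiSym 2 S.natAbs : ℤ) : ℂ) ^ n *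
            (Real.sqrt (2 ^ n) : ℂ) := by
  refine ⟨Gsum_two hS, fun n hn ↦ ?_⟩
  obtain ⟨m, rfl⟩ := Nat.exists_eq_add_of_le' hn
  rw [jacobiSym_two_natAbs hS]
  exact Gsum_two_pow_add_two hS m
end

section
/- Let p be an odd prime, n \ge 1, S coprime to p, w an integer, and \alpha,\beta nonnegative integers with 2\alpha+\beta \le n. Then \sum_{x=0}^{p^n-1} e^{2\pi i S p^\beta (p^\alpha x + w)^2 / p^n} equals 0 if p^\alpha \nmid w, and equals p^{\alpha+\beta} G(S;p^{n-\beta}) if p^\alpha | w. -/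
open Finset

/-!
The summand `e(S p^β (p^α x + w)² / p^n)` depends only on `x` modulo a power of `p`, so each sum
runs over whole periods and is invariant under shifting `x`. If `p^α ∤ w`, write `w = p^γ u` with
`γ < α` and `p ∤ u`: shifting `x` by a suitable power `p^δ` multiplies the summand by the
nontrivial `p`-th root of unity `e(2Su/p)`, so the sum vanishes. If `w = p^α v`, the factor
`p^(2α+β)` cancels against the modulus, the shift by `v` is absorbed, and what remains is
`p^(2α+β) G(S; p^(n-2α-β))`. The recursion `G(S; p^(t+2)) = p G(S; p^t)`, which follows from the
same two cases with `α = 1` after writing `x = p y + r`, turns this into `p^(α+β) G(S; p^(n-β))`.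
-/

open Function

noncomputable def expFrac (N : ℕ) (m : ℤ) : ℂ :=
  Complex.exp (2 * Real.pi * Complex.I * m / N)

lemma expFrac_add (N : ℕ) (a b : ℤ) : expFrac N (a + b) = expFrac N a * expFrac N b := by
  rw [expFrac, expFrac, expFrac, ← Complex.exp_add]
  congr 1
  push_cast
  ring

lemma expFrac_eq_stdAddChar (N : ℕ) [NeZero N] (m : ℤ) :
    expFrac N m = ZMod.stdAddChar (m : ZMod N) :=
  (ZMod.stdAddChar_coe m).symm

lemma expFrac_eq_one_iff {N : ℕ} (hN : N ≠ 0) (m : ℤ) : expFrac N m = 1 ↔ (N : ℤ) ∣ m := by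
  have : NeZero N := ⟨hN⟩
  rw [expFrac_eq_stdAddChar, ← ZMod.intCast_zmod_eq_zero_iff_dvd,
    ← AddChar.map_zero_eq_one (ZMod.stdAddChar (N := N)), ZMod.injective_stdAddChar.eq_iff]

lemma expFrac_eq_of_dvd_sub {N : ℕ} {a b : ℤ} (h : (N : ℤ) ∣ a - b) :
    expFrac N a = expFrac N b := by
  rcases eq_or_ne N 0 with rfl | hN
  · rw [sub_eq_zero.mp (zero_dvd_iff.mp (by simpa using h) : a - b = 0)]
  · have : NeZero N := ⟨hN⟩
    rw [expFrac_eq_stdAddChar, expFrac_eq_stdAddChar,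
      (ZMod.intCast_eq_intCast_iff_dvd_sub b a N).mpr h]

lemma expFrac_mul_mul {k : ℕ} (hk : k ≠ 0) (N : ℕ) (m : ℤ) :
    expFrac (k * N) (k * m) = expFrac N m := by
  have hk' : (k : ℂ) ≠ 0 := Nat.cast_ne_zero.mpr hk
  rw [expFrac, expFrac]
  push_cast
  rw [mul_left_comm _ (k : ℂ), mul_div_mul_left _ _ hk']

lemma Gsum_eq_sum_expFrac (S : ℤ) (k : ℕ) : Gsum S k = ∑ x ∈ range k, expFrac k (S * x ^ 2) := rfl

section PeriodicSums

variable {M : Type*} [AddCommGroup M]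

lemma sum_range_mul_eq_sum_sum (h : ℤ → M) (d m : ℕ) :
    ∑ x ∈ range (d * m), h x = ∑ i ∈ range m, ∑ j ∈ range d, h (d * i + j) := by
  induction m with
  | zero => simp
  | succ m ih =>
    rw [sum_range_succ, ← ih, Nat.mul_succ, sum_range_add]
    push_cast
    rfl

namespace Function.Periodic

variable {h : ℤ → M} {N : ℕ}

lemma sum_range_add_one (hh : Periodic h N) :
    ∑ x ∈ range N, h (x + 1) = ∑ x ∈ range N, h x := by
  have key := sum_range_succ' (fun x : ℕ => h x) N
  rw [sum_range_succ, show h N = h 0 by simpa using hh 0] at key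
  push_cast at key
  exact (add_right_cancel key).symm

lemma sum_range_add_int (hh : Periodic h N) (v : ℤ) :
    ∑ x ∈ range N, h (x + v) = ∑ x ∈ range N, h x := by
  induction v using Int.induction_on with
  | zero => simp
  | succ i ih =>
    rw [← ih, ← (hh.add_const (i : ℤ)).sum_range_add_one]
    simp only [add_right_comm, add_assoc]
  | pred i ih =>
    rw [← ih, ← (hh.add_const (-(i : ℤ) - 1)).sum_range_add_one]
    congr! 2
    ring

lemma sum_range_mul_s10 (hh : Periodic h N) (m : ℕ) :
    ∑ x ∈ range (N * m), h x = m • ∑ x ∈ range N, h x := by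
  calc ∑ x ∈ range (N * m), h x = ∑ i ∈ range m, ∑ j ∈ range N, h j := by
        rw [sum_range_mul_eq_sum_sum]
        refine sum_congr rfl fun i _ => sum_congr rfl fun j _ => ?_
        rw [add_comm, mul_comm]
        exact hh.nat_mul i j
    _ = m • ∑ x ∈ range N, h x := by rw [sum_const, card_range]

lemma sum_range_eq_zero_of_add_eq_mul {R : Type*} [CommRing R] [IsDomain R] {h : ℤ → R}
    (hh : Periodic h N) {T : ℤ} {ζ : R} (hT : ∀ x, h (x + T) = ζ * h x) (hζ : ζ ≠ 1) :
    ∑ x ∈ range N, h x = 0 := by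
  have hfix : ∑ x ∈ range N, h x = ζ * ∑ x ∈ range N, h x := by
    calc ∑ x ∈ range N, h x = ∑ x ∈ range N, h (x + T) := (hh.sum_range_add_int T).symm
      _ = ζ * ∑ x ∈ range N, h x := by simp only [hT, mul_sum]
  have : (1 - ζ) * ∑ x ∈ range N, h x = 0 := by rw [sub_mul, one_mul, ← hfix, sub_self]
  exact (mul_eq_zero.mp this).resolve_left (sub_ne_zero.mpr hζ.symm)

end Function.Periodic

end PeriodicSums

lemma exists_eq_pow_mul_of_not_pow_dvd {M : Type*} [CommMonoid M] {p w : M} {α : ℕ}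
    (h : ¬ p ^ α ∣ w) : ∃ γ < α, ∃ u, w = p ^ γ * u ∧ ¬ p ∣ u := by
  induction α with
  | zero => simp at h
  | succ α ih =>
    by_cases hα : p ^ α ∣ w
    · obtain ⟨u, rfl⟩ := hα
      exact ⟨α, lt_add_one α, u, rfl, fun hu => h (pow_succ p α ▸ mul_dvd_mul_left _ hu)⟩
    · obtain ⟨γ, hγ, hu⟩ := ih hα
      exact ⟨γ, hγ.trans (lt_add_one α), hu⟩

lemma periodic_expFrac_sq (S w : ℤ) (a d : ℕ) :
    Periodic (fun x : ℤ => expFrac (a * d) (S * (a * x + w) ^ 2)) d := fun x =>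
  expFrac_eq_of_dvd_sub ⟨S * (2 * (a * x + w) + a * d), by push_cast; ring⟩

lemma sum_range_expFrac_sq_mul {a : ℕ} (ha : a ≠ 0) (S v : ℤ) (d m : ℕ) :
    ∑ x ∈ range (d * m), expFrac (a ^ 2 * d) (S * (a * x + a * v) ^ 2) = m * Gsum S d := by
  have h0 : Periodic (fun x : ℤ => expFrac d (S * x ^ 2)) d := by
    simpa using periodic_expFrac_sq S 0 1 d
  calc ∑ x ∈ range (d * m), expFrac (a ^ 2 * d) (S * (a * x + a * v) ^ 2)
      = ∑ x ∈ range (d * m), expFrac d (S * (x + v) ^ 2) :=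
        sum_congr rfl fun x _ => by
          rw [← expFrac_mul_mul (pow_ne_zero 2 ha) d]
          push_cast
          ring_nf
    _ = m • ∑ x ∈ range d, expFrac d (S * (x + v) ^ 2) := (h0.add_const v).sum_range_mul_s10 m
    _ = m * Gsum S d := by rw [h0.sum_range_add_int v, nsmul_eq_mul, Gsum_eq_sum_expFrac]

lemma sum_range_expFrac_sq_eq_zero {p : ℕ} (hp : p.Prime) (hodd : p ≠ 2) {S : ℤ}
    (hS : ¬ (p : ℤ) ∣ S) {w : ℤ} {α k N : ℕ} (hw : ¬ (p : ℤ) ^ α ∣ w) (hk : 2 * α ≤ k)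
    (hN : p ^ (k - α) ∣ N) :
    ∑ x ∈ range N, expFrac (p ^ k) (S * ((p : ℤ) ^ α * x + w) ^ 2) = 0 := by
  have hpI : Prime (p : ℤ) := Nat.prime_iff_prime_int.mp hp
  obtain ⟨γ, hγ, u, rfl, hu⟩ := exists_eq_pow_mul_of_not_pow_dvd hw
  obtain ⟨a, rfl⟩ : ∃ a, α = γ + 1 + a := ⟨α - (γ + 1), by omega⟩
  obtain ⟨δ, rfl⟩ : ∃ δ, k = (γ + 1 + a) + (γ + 1 + δ) := ⟨k - (2 * γ + 2 + a), by omega⟩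
  obtain ⟨c, rfl⟩ := hN
  rw [Nat.add_sub_cancel_left]
  have hper : Periodic (fun x : ℤ => expFrac (p ^ ((γ + 1 + a) + (γ + 1 + δ)))
      (S * ((p : ℤ) ^ (γ + 1 + a) * x + p ^ γ * u) ^ 2)) ((p ^ (γ + 1 + δ) * c : ℕ) : ℤ) := by
    rw [Nat.cast_mul, mul_comm _ (c : ℤ)]
    simpa only [← pow_add, Nat.cast_pow] using
      (periodic_expFrac_sq S (p ^ γ * u) (p ^ (γ + 1 + a)) (p ^ (γ + 1 + δ))).nat_mul c
  -- Modulo `p^k`, shifting `x` by `p^δ` changes the argument by `p^(k-1) * 2Su` exactly.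
  refine hper.sum_range_eq_zero_of_add_eq_mul (T := (p : ℤ) ^ δ) (ζ := expFrac p (2 * S * u))
    (fun x => ?_) ?_
  · have hζ : expFrac p (2 * S * u) = expFrac (p ^ (2 * γ + 1 + a + δ) * p)
        (p ^ (2 * γ + 1 + a + δ) * (2 * S * u)) :=
      (expFrac_mul_mul (pow_ne_zero _ hp.ne_zero) p _).symm
    rw [hζ, ← pow_succ, show 2 * γ + 1 + a + δ + 1 = γ + 1 + a + (γ + 1 + δ) by ring,
      ← expFrac_add]
    exact expFrac_eq_of_dvd_sub ⟨S * (2 * p ^ a * x + p ^ (a + δ)), by push_cast; ring⟩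
  · rw [Ne, expFrac_eq_one_iff hp.ne_zero]
    have h2 : ¬ (p : ℤ) ∣ 2 := fun h2 =>
      hodd ((Nat.prime_dvd_prime_iff_eq hp Nat.prime_two).mp (by exact_mod_cast h2))
    exact hpI.not_dvd_mul (hpI.not_dvd_mul h2 hS) hu

lemma Gsum_prime_pow_add_two {p : ℕ} (hp : p.Prime) (hodd : p ≠ 2) {S : ℤ}
    (hS : ¬ (p : ℤ) ∣ S) (t : ℕ) : Gsum S (p ^ (t + 2)) = p * Gsum S (p ^ t) := by
  rw [Gsum_eq_sum_expFrac, show p ^ (t + 2) = p * p ^ (t + 1) by ring,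
    sum_range_mul_eq_sum_sum (fun x : ℤ => expFrac (p * p ^ (t + 1)) (S * x ^ 2)), sum_comm,
    sum_eq_single_of_mem 0 (mem_range.mpr hp.pos)]
  · have hzero := sum_range_expFrac_sq_mul hp.ne_zero S 0 (p ^ t) p
    rw [← pow_succ, show p ^ 2 * p ^ t = p * p ^ (t + 1) by ring] at hzero
    simpa using hzero
  · intro r hr hr0
    have hpr : ¬ (p : ℤ) ^ 1 ∣ r := by
      rw [pow_one, Int.natCast_dvd_natCast]
      exact fun h => hr0 (Nat.eq_zero_of_dvd_of_lt h (mem_range.mp hr))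
    have hvanish := sum_range_expFrac_sq_eq_zero hp hodd hS hpr (k := t + 2) (N := p ^ (t + 1))
      (by omega) dvd_rfl
    rw [← pow_succ']
    simpa using hvanish

lemma Gsum_prime_pow_add_mul_two {p : ℕ} (hp : p.Prime) (hodd : p ≠ 2) {S : ℤ}
    (hS : ¬ (p : ℤ) ∣ S) (t j : ℕ) : Gsum S (p ^ (t + 2 * j)) = p ^ j * Gsum S (p ^ t) := by
  induction j with
  | zero => simp
  | succ j ih =>
    rw [show t + 2 * (j + 1) = t + 2 * j + 2 by ring, Gsum_prime_pow_add_two hp hodd hS, ih]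
    ring

theorem stmt_10_general (p : ℕ) (hp : p.Prime) (hodd : p ≠ 2) (n : ℕ)
    (S : ℤ) (hS : IsCoprime S (p : ℤ)) (w : ℤ) (α β : ℕ)
    (h : 2 * α + β ≤ n) :
    (¬ (p : ℤ) ^ α ∣ w →
      ∑ x ∈ Finset.range (p ^ n),
          Complex.exp (2 * Real.pi * Complex.I *
            ((S * (p : ℤ) ^ β * ((p : ℤ) ^ α * (x : ℤ) + w) ^ 2 : ℤ) : ℂ) / ((p : ℂ) ^ n)) = 0) ∧
    ((p : ℤ) ^ α ∣ w →
      ∑ x ∈ Finset.range (p ^ n),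
          Complex.exp (2 * Real.pi * Complex.I *
            ((S * (p : ℤ) ^ β * ((p : ℤ) ^ α * (x : ℤ) + w) ^ 2 : ℤ) : ℂ) / ((p : ℂ) ^ n)) =
        (p : ℂ) ^ (α + β) * Gsum S (p ^ (n - β))) := by
  have hpS : ¬ (p : ℤ) ∣ S := fun hd =>
    (Nat.prime_iff_prime_int.mp hp).not_isUnit (hS.isUnit_of_dvd' hd dvd_rfl)
  obtain ⟨k, rfl⟩ : ∃ k, n = β + k := ⟨n - β, by omega⟩
  have hsummand (x : ℕ) : Complex.exp (2 * Real.pi * Complex.I *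
      ((S * (p : ℤ) ^ β * ((p : ℤ) ^ α * (x : ℤ) + w) ^ 2 : ℤ) : ℂ) / ((p : ℂ) ^ (β + k))) =
      expFrac (p ^ k) (S * ((p : ℤ) ^ α * x + w) ^ 2) := by
    rw [← expFrac_mul_mul (pow_ne_zero β hp.ne_zero), ← pow_add, expFrac]
    push_cast
    ring_nf
  simp only [hsummand, Nat.add_sub_cancel_left]
  refine ⟨fun hw => sum_range_expFrac_sq_eq_zero hp hodd hpS hw (by omega)
    (pow_dvd_pow p (by omega)), ?_⟩
  rintro ⟨v, rfl⟩
  obtain ⟨j, rfl⟩ : ∃ j, k = j + 2 * α := ⟨k - 2 * α, by omega⟩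
  have key := sum_range_expFrac_sq_mul (pow_ne_zero α hp.ne_zero) S v (p ^ j) (p ^ (β + 2 * α))
  rw [← pow_mul, ← pow_add, ← pow_add, show α * 2 + j = j + 2 * α by ring,
    show j + (β + 2 * α) = β + (j + 2 * α) by ring] at key
  push_cast at key
  rw [key, Gsum_prime_pow_add_mul_two hp hodd hpS]
  ring

theorem stmt_10 (p : ℕ) (hp : p.Prime) (hodd : p ≠ 2) (n : ℕ) (hn : 0 < n)
    (S : ℤ) (hS : IsCoprime S (p : ℤ)) (w : ℤ) (α β : ℕ) (hα : α ≤ n) (hβ : β ≤ n)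
    (h : 2 * α + β ≤ n) :
    (¬ (p : ℤ) ^ α ∣ w →
      ∑ x ∈ Finset.range (p ^ n),
          Complex.exp (2 * Real.pi * Complex.I *
            ((S * (p : ℤ) ^ β * ((p : ℤ) ^ α * (x : ℤ) + w) ^ 2 : ℤ) : ℂ) / ((p : ℂ) ^ n)) = 0) ∧
    ((p : ℤ) ^ α ∣ w →
      ∑ x ∈ Finset.range (p ^ n),
          Complex.exp (2 * Real.pi * Complex.I *
            ((S * (p : ℤ) ^ β * ((p : ℤ) ^ α * (x : ℤ) + w) ^ 2 : ℤ) : ℂ) / ((p : ℂ) ^ n)) =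
        (p : ℂ) ^ (α + β) * Gsum S (p ^ (n - β))) :=
  stmt_10_general p hp hodd n S hS w α β h
end

section
/- Let n > 1, S odd, and a,b,c integers with gcd(a,b,c)=1 such that 2^{n-1} | a and 2^{min(v_2(a),n)} | c. Then G(a,b,c;S;2^n) = 2^n. -/
open Finset

/-!
Absorb `S` into the coefficients and write `k = 2 ^ n`, `Q = a x² + b x y + c y²`, with `a` and `c`
divisible by `2 ^ (n - 1)` and `b` odd. Since `x² ≡ x` mod 2, `Q ≡ (b y + a) x + c y` mod `k`, so
summing over `x` kills every `y` except the single residue with `b y + a ≡ 0`, i.e. `y ≡ a`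
(as `(1 + b) a ≡ 0`). That `y` is divisible by `2 ^ (n - 1)`, hence `c y ≡ 0` when `n ≥ 2`, and
the surviving term is `k`.
-/

theorem Finset.card_filter_range_intCast_dvd_sub {k : ℕ} (hk : 0 < k) (y₀ : ℤ) :
    #{y ∈ range k | (k : ℤ) ∣ ((y : ℕ) : ℤ) - y₀} = 1 := by
  have hk' : (0 : ℤ) < k := by exact_mod_cast hk
  rw [card_eq_one]
  refine ⟨(y₀ % k).toNat, ?_⟩
  ext y
  simp only [mem_filter, mem_range, mem_singleton, ← Int.modEq_iff_dvd, Int.ModEq]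
  have hnn := Int.emod_nonneg y₀ hk'.ne'
  have hlt := Int.emod_lt_of_pos y₀ hk'
  constructor
  · rintro ⟨hy, hmod⟩
    rw [hmod, Int.emod_eq_of_lt (by positivity) (by exact_mod_cast hy)]
    simp
  · rintro rfl
    refine ⟨by omega, ?_⟩
    rw [Int.toNat_of_nonneg hnn, Int.emod_emod_of_dvd _ dvd_rfl]

theorem Int.two_mul_dvd_mul_sq_sub_self {m a : ℤ} (h : m ∣ a) (x : ℤ) :
    2 * m ∣ a * (x ^ 2 - x) := by
  rw [mul_comm 2, sq, ← mul_sub_one]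
  exact mul_dvd_mul h (Int.even_mul_pred_self x).two_dvd

theorem Int.two_pow_succ_dvd_mul_add_iff {n : ℕ} {a b : ℤ} (ha : 2 ^ n ∣ a) (hb : Odd b)
    (y : ℤ) :
    2 ^ (n + 1) ∣ b * y + a ↔ 2 ^ (n + 1) ∣ y - a := by
  have hba : 2 ^ (n + 1) ∣ (1 + b) * a := by
    rw [pow_succ', add_comm]
    exact mul_dvd_mul hb.add_one.two_dvd ha
  rw [show b * y + a = b * (y - a) + (1 + b) * a by ring, dvd_add_left hba]
  exact ⟨(Int.isCoprime_two_left.2 hb).pow_left.dvd_of_dvd_mul_left, (Dvd.dvd.mul_left · b)⟩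

namespace IsPrimitiveRoot

variable {K : Type*} [Field K] {ζ : K} {k : ℕ}

theorem zpow_eq_zpow_of_dvd_sub (hζ : IsPrimitiveRoot ζ k) {m m' : ℤ} (h : (k : ℤ) ∣ m - m') :
    ζ ^ m = ζ ^ m' := by
  rcases eq_or_ne k 0 with rfl | hk
  · rw [Nat.cast_zero, zero_dvd_iff, sub_eq_zero] at h
    rw [h]
  · rw [← sub_add_cancel m m', zpow_add₀ (hζ.ne_zero hk), (hζ.zpow_eq_one_iff_dvd _).2 h, one_mul]

theorem sum_range_zpow_mul (hζ : IsPrimitiveRoot ζ k) (m : ℤ) :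
    ∑ x ∈ range k, ζ ^ (m * x) = if (k : ℤ) ∣ m then (k : K) else 0 := by
  split_ifs with h
  · simp [(hζ.zpow_eq_one_iff_dvd _).2 (h.mul_right _)]
  · have hω : ζ ^ m ≠ 1 := mt (hζ.zpow_eq_one_iff_dvd m).1 h
    have hωk : (ζ ^ m) ^ k = 1 := by
      rw [← zpow_natCast, ← zpow_mul, mul_comm, zpow_mul, hζ.zpow_eq_one, one_zpow]
    simp_rw [zpow_mul, zpow_natCast]
    refine eq_zero_of_ne_zero_of_mul_left_eq_zero (sub_ne_zero.2 hω.symm) ?_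
    rw [mul_neg_geom_sum, hωk, sub_self]

theorem sum_sum_zpow_quadratic_eq_two_pow {n : ℕ} (hζ : IsPrimitiveRoot ζ (2 ^ (n + 1)))
    (hn : 0 < n) {a b c : ℤ} (ha : 2 ^ n ∣ a) (hb : Odd b) (hc : 2 ^ n ∣ c) :
    ∑ x ∈ range (2 ^ (n + 1)), ∑ y ∈ range (2 ^ (n + 1)),
      ζ ^ (a * (x : ℤ) ^ 2 + b * (x : ℤ) * (y : ℤ) + c * (y : ℤ) ^ 2) = 2 ^ (n + 1) := by
  have hlin (x y : ℤ) :
      ζ ^ (a * x ^ 2 + b * x * y + c * y ^ 2) = ζ ^ ((b * y + a) * x) * ζ ^ (c * y) := by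
    rw [← zpow_add₀ (hζ.ne_zero (by positivity))]
    apply hζ.zpow_eq_zpow_of_dvd_sub
    rw [show a * x ^ 2 + b * x * y + c * y ^ 2 - ((b * y + a) * x + c * y)
      = a * (x ^ 2 - x) + c * (y ^ 2 - y) by ring]
    push_cast
    rw [pow_succ']
    exact dvd_add (Int.two_mul_dvd_mul_sq_sub_self ha x) (Int.two_mul_dvd_mul_sq_sub_self hc y)
  have hvanish (y : ℤ) (hy : 2 ^ (n + 1) ∣ y - a) : ζ ^ (c * y) = 1 := by
    have hy' : 2 ^ n ∣ y := sub_add_cancel y a ▸ dvd_add ((pow_dvd_pow 2 n.le_succ).trans hy) ha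
    rw [hζ.zpow_eq_one_iff_dvd]
    push_cast
    rw [pow_succ]
    exact mul_dvd_mul hc ((dvd_pow_self 2 hn.ne').trans hy')
  have hrow (y : ℕ) :
      ∑ x ∈ range (2 ^ (n + 1)), ζ ^ (a * (x : ℤ) ^ 2 + b * (x : ℤ) * (y : ℤ) + c * (y : ℤ) ^ 2)
        = if ((2 ^ (n + 1) : ℕ) : ℤ) ∣ (y : ℤ) - a then ((2 ^ (n + 1) : ℕ) : K) else 0 := by
    simp_rw [hlin, ← sum_mul, hζ.sum_range_zpow_mul, Nat.cast_pow, Nat.cast_ofNat,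
      Int.two_pow_succ_dvd_mul_add_iff ha hb]
    split_ifs with h
    · rw [hvanish y h, mul_one]
    · rw [zero_mul]
  rw [sum_comm, sum_congr rfl fun y _ => hrow y, ← sum_filter, sum_const,
    card_filter_range_intCast_dvd_sub (by positivity), one_smul, Nat.cast_pow, Nat.cast_ofNat]

end IsPrimitiveRoot

theorem Gsum2_eq_sum_sum_zpow (a b c S : ℤ) (k : ℕ) :
    Gsum2 a b c S k = ∑ x ∈ range k, ∑ y ∈ range k, Complex.exp (2 * Real.pi * Complex.I / k) ^
      (S * (a * (x : ℤ) ^ 2 + b * (x : ℤ) * (y : ℤ) + c * (y : ℤ) ^ 2)) := by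
  unfold Gsum2
  refine sum_congr rfl fun x _ => sum_congr rfl fun y _ => ?_
  rw [← Complex.exp_int_mul, mul_div_assoc', mul_comm]

theorem stmt_16 (n : ℕ) (hn : 1 < n) (S a b c : ℤ) (hS : Odd S)
    (habc : Int.gcd (Int.gcd a b) c = 1) (ha : (2 : ℤ) ^ (n - 1) ∣ a)
    (hc : ∀ α : ℕ, α ≤ n → (2 : ℤ) ^ α ∣ a → (2 : ℤ) ^ α ∣ c) :
    Gsum2 a b c S (2 ^ n) = (2 : ℂ) ^ n := by
  obtain ⟨n, rfl⟩ : ∃ m, n = m + 1 := ⟨n - 1, by omega⟩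
  rw [Nat.add_sub_cancel] at ha
  have h2 : (2 : ℤ) ∣ 2 ^ n := dvd_pow_self 2 (by omega)
  have hc' : (2 : ℤ) ^ n ∣ c := hc n (by omega) ha
  have hb : Odd b := by
    rw [← Int.not_even_iff_odd, even_iff_two_dvd]
    intro h2b
    have h2gcd := Int.dvd_coe_gcd (Int.dvd_coe_gcd (h2.trans ha) h2b) (h2.trans hc')
    rw [habc] at h2gcd
    norm_num at h2gcd
  rw [Gsum2_eq_sum_sum_zpow]
  have hζ := Complex.isPrimitiveRoot_exp (2 ^ (n + 1)) (by positivity)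
  convert hζ.sum_sum_zpow_quadratic_eq_two_pow (by omega) (ha.mul_left S) (hS.mul hb)
    (hc'.mul_left S) using 4
  ring
end
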